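/- For 0 < η < 1, the double integral ∫₀¹∫₀¹ max(u+v-1, 0) (-log u)^{1/η} dv du equals Γ(1 + 1/η) / (2 · 3^{1+1/η}). -/
import Mathlib


open MeasureTheory Real
open intervalIntegral

lemma inner_max_integral (u : ℝ) (hu : u ∈ Set.Ioo (0:ℝ) 1) :
    ∫ v in Set.Icc (0:ℝ) 1, max (u + v - 1) 0 = u ^ 2 / 2 := by
  obtain ⟨hu0, hu1⟩ := hu
  rw [MeasureTheory.integral_Icc_eq_integral_Ioc,
    ← integral_of_le zero_le_one]
  have hcont : Continuous fun v : ℝ => max (u + v - 1) 0 :=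
    ((continuous_const.add continuous_id).sub continuous_const).max continuous_const
  have hsplit := integral_add_adjacent_intervals
    (a := (0:ℝ)) (b := 1 - u) (c := 1) (f := fun v => max (u + v - 1) 0)
    (hcont.intervalIntegrable (μ := volume) _ _) (hcont.intervalIntegrable (μ := volume) _ _)
  rw [← hsplit]
  have h1 : (∫ v in (0:ℝ)..(1 - u), max (u + v - 1) 0) = 0 := by
    rw [integral_congr (g := fun _ => (0:ℝ))]
    · simp
    · intro v hv
      rw [Set.uIcc_of_le (by linarith)] at hv
      exact max_eq_right (by simp; linarith [hv.2])
  have h2 : (∫ v in (1 - u)..1, max (u + v - 1) 0) = u ^ 2 / 2 := by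
    rw [integral_congr (g := fun v => v + (u - 1))]
    · rw [integral_add intervalIntegrable_id (intervalIntegrable_const),
        integral_id, intervalIntegral.integral_const]
      simp only [smul_eq_mul]
      ring
    · intro v hv
      rw [Set.uIcc_of_le (by linarith)] at hv
      have := hv.1
      show max (u + v - 1) 0 = v + (u - 1)
      rw [max_eq_left (by linarith)]
      ring
  rw [h1, h2, zero_add]

theorem integral_max_weight (η : ℝ) (hη : 0 < η) (hη1 : η < 1) :
    ∫ u in Set.Icc (0:ℝ) 1, ∫ v in Set.Icc (0:ℝ) 1,
        max (u + v - 1) 0 * (-Real.log u) ^ (1/η)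
      = Real.Gamma (1 + 1/η) / (2 * 3 ^ (1 + 1/η)) := by
  have hp : 0 < 1/η := by positivity
  set p := 1/η with hpdef
  rw [MeasureTheory.integral_Icc_eq_integral_Ioo]
  have step1 : ∫ u in Set.Ioo (0:ℝ) 1, (∫ v in Set.Icc (0:ℝ) 1,
      max (u + v - 1) 0 * (-Real.log u) ^ p)
      = ∫ u in Set.Ioo (0:ℝ) 1, u ^ 2 / 2 * (-Real.log u) ^ p := by
    refine setIntegral_congr_fun measurableSet_Ioo (fun u hu => ?_)
    rw [MeasureTheory.integral_mul_const, inner_max_integral u hu]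
  rw [step1]
  have himg : (fun t : ℝ => Real.exp (-t)) '' Set.Ioi (0:ℝ) = Set.Ioo 0 1 := by
    ext x
    constructor
    · rintro ⟨t, ht, rfl⟩
      exact ⟨Real.exp_pos _, Real.exp_lt_one_iff.mpr (by simpa using Set.mem_Ioi.mp ht)⟩
    · rintro ⟨hx0, hx1⟩
      exact ⟨-Real.log x, Set.mem_Ioi.mpr (neg_pos.mpr (Real.log_neg hx0 hx1)),
        by simp [Real.exp_log hx0]⟩
  have hderiv : ∀ t ∈ Set.Ioi (0:ℝ),
      HasDerivWithinAt (fun t : ℝ => Real.exp (-t)) (-Real.exp (-t)) (Set.Ioi 0) t := by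
    intro t _
    have : HasDerivAt (fun t : ℝ => Real.exp (-t)) (Real.exp (-t) * (-1)) t :=
      (Real.hasDerivAt_exp (-t)).comp t (hasDerivAt_neg t)
    simpa [mul_comm] using this.hasDerivWithinAt
  have hinj : Set.InjOn (fun t : ℝ => Real.exp (-t)) (Set.Ioi 0) :=
    fun a _ b _ h => neg_injective (Real.exp_injective h)
  rw [← himg, MeasureTheory.integral_image_eq_integral_abs_deriv_smul
    measurableSet_Ioi hderiv hinj]
  have step2 : ∫ t in Set.Ioi (0:ℝ),
      |-Real.exp (-t)| • ((Real.exp (-t)) ^ 2 / 2 * (-Real.log (Real.exp (-t))) ^ p)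
      = ∫ t in Set.Ioi (0:ℝ), (1/2 : ℝ) * (t ^ ((1 + p) - 1) * Real.exp (-(3 * t))) := by
    refine setIntegral_congr_fun measurableSet_Ioi (fun t _ => ?_)
    rw [abs_neg, abs_of_pos (Real.exp_pos _), Real.log_exp, neg_neg, smul_eq_mul,
      add_sub_cancel_left, sq, ← Real.exp_add]
    have hE : Real.exp (-t) * Real.exp (-t + -t) = Real.exp (-(3 * t)) := by
      rw [← Real.exp_add]; ring_nf
    linear_combination t ^ p / 2 * hE
  rw [step2, MeasureTheory.integral_const_mul,
    integral_rpow_mul_exp_neg_mul_Ioi (by linarith) (by norm_num : (0:ℝ) < 3)]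
  rw [one_div (3:ℝ), Real.inv_rpow (by norm_num : (0:ℝ) ≤ 3)]
  have h3 : (0:ℝ) < 3 ^ (1 + p) := Real.rpow_pos_of_pos (by norm_num) _
  field_simp
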